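/- Let N > 2 be an integer, p > 1, and k < 0. If H : (0, π) → ℝ is differentiable and satisfies the H-equation on (0, π), with H(x) < 0 and H'(x) < 0 for all x ∈ (0, π), then H(x) → -∞ as x → π⁻. -/

import Mathlib

noncomputable section
open Real Set Filter Topology

/-- `H` satisfies the first-order H-equation (for parameters `p`, `N`, `k`) on the set `I`:
`((p-1)H² + k²)H' = (1-p)(H² + k²)² + (H² + k²)(k(p-N) + (2-N)·H·cot x)`. -/
def HEqOn (p : ℝ) (N : ℕ) (k : ℝ) (H : ℝ → ℝ) (I : Set ℝ) : Prop :=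
  ∀ x ∈ I,
    ((p - 1) * (H x) ^ 2 + k ^ 2) * deriv H x =
      (1 - p) * ((H x) ^ 2 + k ^ 2) ^ 2
        + ((H x) ^ 2 + k ^ 2) * (k * (p - (N : ℝ)) + (2 - (N : ℝ)) * H x * Real.cot x)

/-!
Since `H' < 0`, `H` is decreasing, so it suffices to show that `H` is unbounded below.
If instead `B ≤ H ≤ H(π/2) < 0` on `(π/2, π)`, then dividing the H-equation by
`(p-1)H² + k² ∈ [k², (p-1)B² + k²]` gives `H' ≤ C + c·cot x` with `c > 0`, because the
coefficient `(H² + k²)(2-N)H` of `cot x ≤ 0` is bounded away from zero. Integrating,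
`H(x) ≤ const + c·log (sin x) → -∞` as `x → π⁻`, a contradiction.
-/

lemma Real.cot_nonpos {x : ℝ} (h₁ : π / 2 ≤ x) (h₂ : x ≤ π) : cot x ≤ 0 := by
  rw [cot_eq_cos_div_sin]
  exact div_nonpos_of_nonpos_of_nonneg (cos_nonpos_of_pi_div_two_le_of_le h₁ (by linarith))
    (sin_nonneg_of_nonneg_of_le_pi (by linarith [pi_pos]) h₂)

lemma Real.tendsto_log_sin_nhdsLT_pi : Tendsto (fun x => log (sin x)) (𝓝[<] π) atBot := by
  refine tendsto_log_nhdsGT_zero.comp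
    (tendsto_nhdsWithin_of_tendsto_nhds_of_eventually_within _ ?_ ?_)
  · simpa using (continuous_sin.tendsto π).mono_left nhdsWithin_le_nhds
  · filter_upwards [Ioo_mem_nhdsLT pi_pos] with x hx using sin_pos_of_pos_of_lt_pi hx.1 hx.2

lemma AntitoneOn.tendsto_nhdsLT_atBot {α β : Type*} [LinearOrder α] [TopologicalSpace α]
    [ClosedIicTopology α] [Preorder β] {f : α → β} {a b : α} (hf : AntitoneOn f (Ioo a b))
    (hunbdd : ∀ B, ∃ x ∈ Ioo a b, f x ≤ B) : Tendsto f (𝓝[<] b) atBot := by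
  refine tendsto_atBot.2 fun B => ?_
  obtain ⟨x₀, hx₀, hfx₀⟩ := hunbdd B
  filter_upwards [Ioo_mem_nhdsLT hx₀.2] with x hx
  exact (hf hx₀ ⟨hx₀.1.trans hx.1, hx.2⟩ hx.1.le).trans hfx₀

lemma tendsto_atBot_of_deriv_le_add_mul_cot {f : ℝ → ℝ} {a C c : ℝ} (ha : 0 ≤ a) (haπ : a < π)
    (hc : 0 < c) (hf : ∀ x ∈ Ioo a π, DifferentiableAt ℝ f x)
    (hf' : ∀ x ∈ Ioo a π, deriv f x ≤ C + c * cot x) : Tendsto f (𝓝[<] π) atBot := by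
  set g : ℝ → ℝ := fun x => f x - C * x - c * log (sin x)
  have hsin : ∀ x ∈ Ioo a π, sin x ≠ 0 := fun x hx =>
    (sin_pos_of_pos_of_lt_pi (ha.trans_lt hx.1) hx.2).ne'
  have hg : ∀ x ∈ Ioo a π, HasDerivAt g (deriv f x - C - c * cot x) x := fun x hx => by
    have hlog := ((hasDerivAt_sin x).log (hsin x hx)).const_mul c
    rw [← cot_eq_cos_div_sin] at hlog
    exact ((hf x hx).hasDerivAt.sub (hasDerivAt_const_mul C)).sub hlog
  have hg_anti : AntitoneOn g (Ioo a π) := by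
    refine antitoneOn_of_deriv_nonpos (convex_Ioo a π)
      (fun x hx => (hg x hx).continuousAt.continuousWithinAt) ?_ ?_ <;> rw [interior_Ioo]
    · exact fun x hx => (hg x hx).differentiableAt.differentiableWithinAt
    · intro x hx
      rw [(hg x hx).deriv]
      linarith [hf' x hx]
  obtain ⟨x₀, hx₀⟩ := nonempty_Ioo.2 haπ
  have hbound : Tendsto (fun x => (g x₀ + C * x) + c * log (sin x)) (𝓝[<] π) atBot :=
    (((continuous_const.add (continuous_const.mul continuous_id)).tendsto π).mono_left
      nhdsWithin_le_nhds).add_atBot (tendsto_log_sin_nhdsLT_pi.const_mul_atBot hc)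
  refine tendsto_atBot_mono' _ ?_ hbound
  filter_upwards [Ioo_mem_nhdsLT hx₀.2] with x hx
  have := hg_anti hx₀ ⟨hx₀.1.trans hx.1, hx.2⟩ hx.1.le
  simp only [g] at this ⊢
  linarith

lemma slope_le_of_H_equation {p n k δ M h ct h' : ℝ} (hp : 1 < p) (hn : 2 < n) (hk : k ≠ 0)
    (hδ : 0 ≤ δ) (hM : -M ≤ h) (hhδ : h ≤ -δ) (hct : ct ≤ 0)
    (heq : ((p - 1) * h ^ 2 + k ^ 2) * h' =
      (1 - p) * (h ^ 2 + k ^ 2) ^ 2 + (h ^ 2 + k ^ 2) * (k * (p - n) + (2 - n) * h * ct)) :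
    h' ≤ (M ^ 2 + k ^ 2) * |k * (p - n)| / k ^ 2
      + k ^ 2 * (n - 2) * δ / ((p - 1) * M ^ 2 + k ^ 2) * ct := by
  set S := h ^ 2 + k ^ 2
  set D := (p - 1) * h ^ 2 + k ^ 2
  have hk2 : 0 < k ^ 2 := by positivity
  have hhM : h ^ 2 ≤ M ^ 2 := sq_le_sq' hM (by linarith)
  have hkS : k ^ 2 ≤ S := le_add_of_nonneg_left (sq_nonneg h)
  have hSM : S ≤ M ^ 2 + k ^ 2 := by linarith
  have hkD : k ^ 2 ≤ D := le_add_of_nonneg_left (mul_nonneg (by linarith) (sq_nonneg h))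
  have hDM : D ≤ (p - 1) * M ^ 2 + k ^ 2 :=
    add_le_add_left (mul_le_mul_of_nonneg_left hhM (sub_nonneg.2 hp.le)) _
  have hnh : (n - 2) * δ ≤ (2 - n) * h := by nlinarith
  have hD : 0 < D := hk2.trans_le hkD
  have hsplit : h' = ((1 - p) * S ^ 2 + S * (k * (p - n))) / D + S * (2 - n) * h / D * ct := by
    field_simp
    linarith
  have hconst :
      ((1 - p) * S ^ 2 + S * (k * (p - n))) / D ≤ (M ^ 2 + k ^ 2) * |k * (p - n)| / k ^ 2 :=
    calc ((1 - p) * S ^ 2 + S * (k * (p - n))) / D ≤ S * |k * (p - n)| / D := by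
          gcongr
          nlinarith [le_abs_self (k * (p - n)), sq_nonneg S]
      _ ≤ (M ^ 2 + k ^ 2) * |k * (p - n)| / k ^ 2 := by gcongr
  have hcoef : k ^ 2 * (n - 2) * δ / ((p - 1) * M ^ 2 + k ^ 2) ≤ S * (2 - n) * h / D := by
    apply div_le_div₀ _ _ hD hDM
    · rw [mul_assoc]
      exact mul_nonneg (hk2.le.trans hkS) ((mul_nonneg (by linarith) hδ).trans hnh)
    · rw [mul_assoc, mul_assoc]
      exact mul_le_mul hkS hnh (mul_nonneg (by linarith) hδ) (hk2.le.trans hkS)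
  rw [hsplit]
  gcongr ?_ + ?_
  exact mul_le_mul_of_nonpos_right hcoef hct

lemma HEqOn.exists_deriv_le_add_mul_cot {p k δ M : ℝ} {N : ℕ} {H : ℝ → ℝ} {I : Set ℝ}
    (heq : HEqOn p N k H I) (hp : 1 < p) (hN : 2 < N) (hk : k ≠ 0) (hδ : 0 < δ)
    (hbdd : ∀ x ∈ I, -M ≤ H x ∧ H x ≤ -δ) (hcot : ∀ x ∈ I, cot x ≤ 0) :
    ∃ C c : ℝ, 0 < c ∧ ∀ x ∈ I, deriv H x ≤ C + c * cot x := by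
  have hn : (2 : ℝ) < N := by exact_mod_cast hN
  have hc : 0 < k ^ 2 * (N - 2) * δ / ((p - 1) * M ^ 2 + k ^ 2) := by
    have : 0 ≤ (p - 1) * M ^ 2 := mul_nonneg (by linarith) (sq_nonneg M)
    have : 0 < k ^ 2 := by positivity
    exact div_pos (mul_pos (mul_pos this (by linarith)) hδ) (by linarith)
  exact ⟨_, _, hc, fun x hx =>
    slope_le_of_H_equation hp hn hk hδ.le (hbdd x hx).1 (hbdd x hx).2 (hcot x hx) (heq x hx)⟩

/-- A negative decreasing solution of the H-equation on `(0,π)` blows down to `-∞`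
as `x → π⁻`. -/
theorem H_blowup_at_pi (N : ℕ) (hN : 2 < N) (p : ℝ) (hp : 1 < p) (k : ℝ) (hk : k < 0)
    (H : ℝ → ℝ)
    (hd : ∀ x ∈ Ioo (0 : ℝ) π, DifferentiableAt ℝ H x)
    (heq : HEqOn p N k H (Ioo 0 π))
    (hneg : ∀ x ∈ Ioo (0 : ℝ) π, H x < 0 ∧ deriv H x < 0) :
    Tendsto H (nhdsWithin π (Iio π)) atBot := by
  have hanti : AntitoneOn H (Ioo 0 π) :=
    (strictAntiOn_of_deriv_neg (convex_Ioo 0 π)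
      (fun x hx => (hd x hx).continuousAt.continuousWithinAt)
      (fun x hx => by rw [interior_Ioo] at hx; exact (hneg x hx).2)).antitoneOn
  refine hanti.tendsto_nhdsLT_atBot fun B => ?_
  by_contra! hB
  have hmid : π / 2 ∈ Ioo 0 π := ⟨by positivity, by linarith [pi_pos]⟩
  have hsub : Ioo (π / 2) π ⊆ Ioo 0 π := Ioo_subset_Ioo_left hmid.1.le
  obtain ⟨C, c, hc, hslope⟩ := HEqOn.exists_deriv_le_add_mul_cot (M := -B)
    (fun x hx => heq x (hsub hx)) hp hN hk.ne (neg_pos.2 (hneg _ hmid).1)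
    (fun x hx => ⟨by linarith [hB x (hsub hx)], by linarith [hanti hmid (hsub hx) hx.1.le]⟩)
    (fun x hx => cot_nonpos hx.1.le hx.2.le)
  have hlim := tendsto_atBot_of_deriv_le_add_mul_cot (by positivity) (by linarith [pi_pos]) hc
    (fun x hx => hd x (hsub hx)) hslope
  obtain ⟨x, hxB, hx⟩ := ((hlim.eventually_le_atBot B).and (Ioo_mem_nhdsLT pi_pos)).exists
  exact (hB x hx).not_ge hxB
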